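/- Let GMA(M,C,D) on ℓ factors be as in the direct formula, with all entries positive, M_k ≤ C_k and M_k ≤ D_k. For 1 ≤ z < ℓ let GMA_z denote the same formula applied to the prefix of length z. Then GMA_ℓ ≤ GMA_{ℓ-1} ≤ … ≤ GMA_1, i.e., the allocation is non-increasing in the path length (extensibility). -/
import Mathlib


noncomputable def gmaTerm (M C D : ℕ → ℝ) (z x : ℕ) : ℝ :=
  (∏ k ∈ Finset.Ico 1 x, M k / C k) * M x * ∏ k ∈ Finset.Icc (x + 1) z, M k / D k

/-- The GMA allocation computed on the prefix of length `z`. -/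
noncomputable def gmaPrefix (M C D : ℕ → ℝ) (z : ℕ) (hz : 1 ≤ z) : ℝ :=
  (Finset.Icc 1 z).inf' (Finset.nonempty_Icc.mpr hz) (gmaTerm M C D z)

lemma gmaTerm_pos (M C D : ℕ → ℝ) (hM : ∀ k, 0 < M k) (hC : ∀ k, 0 < C k)
    (hD : ∀ k, 0 < D k) (z x : ℕ) : 0 < gmaTerm M C D z x := by
  unfold gmaTerm
  apply mul_pos (mul_pos _ (hM x)) <;>
    exact Finset.prod_pos fun k _ => div_pos (hM k) (by first | exact hC k | exact hD k)

lemma gmaTerm_succ (M C D : ℕ → ℝ) (z x : ℕ) (hx : x ≤ z) :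
    gmaTerm M C D (z + 1) x = gmaTerm M C D z x * (M (z + 1) / D (z + 1)) := by
  unfold gmaTerm
  rw [Finset.prod_Icc_succ_top (by omega : x + 1 ≤ z + 1)]
  ring

lemma gmaPrefix_succ_le (M C D : ℕ → ℝ)
    (hM : ∀ k, 0 < M k) (hC : ∀ k, 0 < C k) (hD : ∀ k, 0 < D k)
    (hMD : ∀ k, M k ≤ D k) (z : ℕ) (hz : 1 ≤ z) :
    gmaPrefix M C D (z + 1) (hz.trans (Nat.le_succ z)) ≤ gmaPrefix M C D z hz := by
  unfold gmaPrefix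
  obtain ⟨x, hx, hxe⟩ := Finset.exists_mem_eq_inf' (Finset.nonempty_Icc.mpr hz)
    (gmaTerm M C D z)
  rw [hxe]
  have hmem : x ∈ Finset.Icc 1 (z + 1) := by
    simp only [Finset.mem_Icc] at hx ⊢; omega
  calc (Finset.Icc 1 (z + 1)).inf' _ (gmaTerm M C D (z + 1))
      ≤ gmaTerm M C D (z + 1) x := Finset.inf'_le _ hmem
    _ ≤ gmaTerm M C D z x := by
        rw [gmaTerm_succ M C D z x (by simp only [Finset.mem_Icc] at hx; omega)]
        apply mul_le_of_le_one_right (gmaTerm_pos M C D hM hC hD z x).le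
        exact div_le_one_of_le₀ (hMD _) (hD _).le

theorem gma_extensible (ℓ : ℕ) (M C D : ℕ → ℝ)
    (hM : ∀ k, 0 < M k) (hC : ∀ k, 0 < C k) (hD : ∀ k, 0 < D k)
    (hMC : ∀ k, M k ≤ C k) (hMD : ∀ k, M k ≤ D k)
    (z w : ℕ) (hw : 1 ≤ w) (hwz : w ≤ z) (hzℓ : z ≤ ℓ) :
    gmaPrefix M C D z (hw.trans hwz) ≤ gmaPrefix M C D w hw := by
  induction z, hwz using Nat.le_induction with
  | base => exact le_refl _
  | succ n hn ih =>
      exact (gmaPrefix_succ_le M C D hM hC hD hMD n (hw.trans hn)).trans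
        (ih (by omega))
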